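/- arXiv:1805.06813 — 2 statements merged into one kernel-verified Lean document; each statement's English description precedes it below -/
import Mathlib

section
/- For the Rogers–McCulloch nonlinearities f(u,w) = bu(u-a)(u-1) + uw and g(u,w) = -ε(ku - w) with 0 < a < 1 and b, k, ε > 0, there exist constants r > 0, C₀ ∈ ℝ, and C₁, C₂ > 0 such that C₀ + C₁|u|⁴ + C₂|w|² ≤ r·f(u,w)·u + g(u,w)·w for all real u, w. -/
private lemma cube_absorb (A B t : ℝ) (hA : 0 ≤ A) (hB : 0 < B) (ht : 0 ≤ t) :
    A * t ^ 3 ≤ B * t ^ 4 + A ^ 4 / B ^ 3 := by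
  rcases le_or_gt t (A / B) with h | h
  · have h1 : A * t ^ 3 ≤ A * (A / B) ^ 3 :=
      mul_le_mul_of_nonneg_left (pow_le_pow_left₀ ht h 3) hA
    have h2 : A * (A / B) ^ 3 = A ^ 4 / B ^ 3 := by field_simp
    nlinarith [mul_nonneg hB.le (pow_nonneg ht 4)]
  · have hA' : A < B * t := by
      rw [div_lt_iff₀ hB] at h; linarith [h]
    have h4 : 0 ≤ A ^ 4 / B ^ 3 := by positivity
    nlinarith [pow_nonneg ht 3, mul_le_mul_of_nonneg_right hA'.le (pow_nonneg ht 3)]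

private lemma sq_absorb (A B t : ℝ) (hA : 0 ≤ A) (hB : 0 < B) (ht : 0 ≤ t) :
    A * t ^ 2 ≤ B * t ^ 4 + A ^ 2 / B := by
  rcases le_or_gt (t ^ 2) (A / B) with h | h
  · have h1 : A * t ^ 2 ≤ A * (A / B) :=
      mul_le_mul_of_nonneg_left h hA
    have h2 : A * (A / B) = A ^ 2 / B := by field_simp
    nlinarith [mul_nonneg hB.le (pow_nonneg ht 4)]
  · have hA' : A < B * t ^ 2 := by
      rw [div_lt_iff₀ hB] at h; linarith [h]
    have h4 : 0 ≤ A ^ 2 / B := by positivity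
    nlinarith [sq_nonneg t, mul_le_mul_of_nonneg_right hA'.le (sq_nonneg t)]

theorem rogers_mcculloch_coercivity (a b k ε : ℝ) (ha0 : 0 < a) (ha1 : a < 1)
    (hb : 0 < b) (hk : 0 < k) (hε : 0 < ε) :
    ∃ (r C0 C1 C2 : ℝ), 0 < r ∧ 0 < C1 ∧ 0 < C2 ∧ ∀ u w : ℝ,
      C0 + C1 * |u| ^ 4 + C2 * |w| ^ 2 ≤
        r * ((b * u ^ 3 - b * (a + 1) * u ^ 2 + b * a * u + u * w) * u)
          + (-ε * (k * u - w)) * w := by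
  refine ⟨ε * b / 2,
    -((ε * b ^ 2 * (a + 1) / 2) ^ 4 / (ε * b ^ 2 / 16) ^ 3
        + (ε * k ^ 2) ^ 2 / (ε * b ^ 2 / 16)),
    ε * b ^ 2 / 8, ε / 2, by positivity, by positivity, by positivity, ?_⟩
  intro u w
  have hu4 : |u| ^ 4 = u ^ 4 := by
    rw [← abs_pow]; exact abs_of_nonneg (by positivity)
  have hw2 : |w| ^ 2 = w ^ 2 := sq_abs w
  rw [hu4, hw2]
  have ht : (0:ℝ) ≤ |u| := abs_nonneg u
  have h3 := cube_absorb (ε * b ^ 2 * (a + 1) / 2) (ε * b ^ 2 / 16) |u|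
    (by positivity) (by positivity) ht
  have h2 := sq_absorb (ε * k ^ 2) (ε * b ^ 2 / 16) |u|
    (by positivity) (by positivity) ht
  have hu3 : u ^ 3 ≤ |u| ^ 3 := by
    calc u ^ 3 ≤ |u ^ 3| := le_abs_self _
    _ = |u| ^ 3 := abs_pow u 3
  have hu4' : |u| ^ 4 = u ^ 4 := hu4
  have hu2 : |u| ^ 2 = u ^ 2 := sq_abs u
  have h3' : (ε * b ^ 2 * (a + 1) / 2) * u ^ 3 ≤
      (ε * b ^ 2 / 16) * u ^ 4
        + (ε * b ^ 2 * (a + 1) / 2) ^ 4 / (ε * b ^ 2 / 16) ^ 3 := by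
    have := mul_le_mul_of_nonneg_left hu3 (by positivity :
      (0:ℝ) ≤ ε * b ^ 2 * (a + 1) / 2)
    rw [hu4'] at h3; linarith
  have h2' : (ε * k ^ 2) * u ^ 2 ≤
      (ε * b ^ 2 / 16) * u ^ 4 + (ε * k ^ 2) ^ 2 / (ε * b ^ 2 / 16) := by
    rw [hu4', hu2] at h2; linarith
  have hs1 : 0 ≤ ε * ((b / 2) * u ^ 2 + w / 2) ^ 2 :=
    mul_nonneg hε.le (sq_nonneg _)
  have hs2 : 0 ≤ ε * (k * u - w / 2) ^ 2 :=
    mul_nonneg hε.le (sq_nonneg _)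
  have hba : 0 ≤ (ε * b / 2) * (b * a) * u ^ 2 := by positivity
  nlinarith [h3', h2', hs1, hs2, hba]
end

section
/- For the modified Aliev–Panfilov nonlinearities f(u,w) = bu(u-a)(u-1) + uw and g(u,w) = ε(ku(u-1-d) + w) with 0 < a, d < 1, b, k, ε > 0, and b > k, there exist constants r > 0, C₀ ∈ ℝ, and C₁, C₂ > 0 such that C₀ + C₁|u|⁴ + C₂|w|² ≤ r·f(u,w)·u + g(u,w)·w for all real u, w. -/
set_option maxHeartbeats 2000000 in


theorem aliev_panfilov_coercivity (a d b k ε : ℝ) (ha0 : 0 < a) (ha1 : a < 1)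
    (hd0 : 0 < d) (hd1 : d < 1) (hb : 0 < b) (hk : 0 < k) (hε : 0 < ε)
    (hbk : b > k) :
    ∃ (r C0 C1 C2 : ℝ), 0 < r ∧ 0 < C1 ∧ 0 < C2 ∧ ∀ u w : ℝ,
      C0 + C1 * |u| ^ 4 + C2 * |w| ^ 2 ≤
        r * ((b * u ^ 3 - b * (a + 1) * u ^ 2 + b * a * u + u * w) * u)
          + (ε * (k * u * (u - 1 - d) + w)) * w := by
  have hbk' : (0:ℝ) < b - k := by linarith
  have hbk2 : (0:ℝ) < b + k := by linarith
  refine ⟨ε * k,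
    -((k * (ε * k * (1 + d)) ^ 2 * (b + k) + 8 * (ε * k * b * (a + 1)) ^ 2) ^ 2
        / (ε ^ 3 * k ^ 3 * (b - k) ^ 3)),
    ε * k * (b - k) / 4, ε * (b - k) / (2 * (b + k)), by positivity, by positivity,
    by positivity, ?_⟩
  intro u w
  have habs4 : |u| ^ 4 = u ^ 4 := by
    rw [← abs_pow]; exact abs_of_nonneg (by positivity)
  have habs2 : |w| ^ 2 = w ^ 2 := sq_abs w
  rw [habs4, habs2, ← sub_nonneg]
  have hN : (0:ℝ) < ε ^ 3 * k ^ 3 * (b - k) ^ 3 * (b + k) := by positivity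
  have key : 0 ≤ (ε ^ 3 * k ^ 3 * (b - k) ^ 3 * (b + k)) *
      ((ε * k * ((b * u ^ 3 - b * (a + 1) * u ^ 2 + b * a * u + u * w) * u)
          + (ε * (k * u * (u - 1 - d) + w)) * w) -
        (-((k * (ε * k * (1 + d)) ^ 2 * (b + k) + 8 * (ε * k * b * (a + 1)) ^ 2) ^ 2
              / (ε ^ 3 * k ^ 3 * (b - k) ^ 3))
          + ε * k * (b - k) / 4 * u ^ 4 + ε * (b - k) / (2 * (b + k)) * w ^ 2)) := by
    have e : (ε ^ 3 * k ^ 3 * (b - k) ^ 3 * (b + k)) *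
        ((ε * k * ((b * u ^ 3 - b * (a + 1) * u ^ 2 + b * a * u + u * w) * u)
            + (ε * (k * u * (u - 1 - d) + w)) * w) -
          (-((k * (ε * k * (1 + d)) ^ 2 * (b + k) + 8 * (ε * k * b * (a + 1)) ^ 2) ^ 2
                / (ε ^ 3 * k ^ 3 * (b - k) ^ 3))
            + ε * k * (b - k) / 4 * u ^ 4 + ε * (b - k) / (2 * (b + k)) * w ^ 2)) =
        (ε ^ 4 * k ^ 4 * (b - k) ^ 3 / 2) * ((k + b) * u ^ 2 + 2 * w) ^ 2
        + (ε ^ 2 * k ^ 3 * (b - k) ^ 2 / 2) *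
            (ε * (b - k) * w - ε * k * (1 + d) * (b + k) * u) ^ 2
        + (ε ^ 2 * k ^ 2 * (b - k) ^ 2 * (b + k)) *
            (ε * k * (b - k) / 4 * u ^ 2 - 2 * (ε * k * b * (a + 1)) * u) ^ 2
        + ((b + k) / 4) *
            (ε ^ 2 * k ^ 2 * (b - k) ^ 2 / 2 * u ^ 2 -
              2 * (k * (ε * k * (1 + d)) ^ 2 * (b + k)
                + 8 * (ε * k * b * (a + 1)) ^ 2)) ^ 2
        + (ε ^ 4 * k ^ 4 * (b - k) ^ 4 * (b + k) / 8) * u ^ 4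
        + (ε ^ 4 * k ^ 4 * (b - k) ^ 3 * (b + k) * b * a) * u ^ 2 := by
      field_simp
      ring
    rw [e]
    positivity
  exact le_of_mul_le_mul_left (by linarith) hN
end
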